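/- Let C be a closed κ-hyperbolically convex subset of ℍⁿ_κ containing a point p̄, let f : ℍⁿ_κ → ℝ be differentiable with grad f(p̄) ≠ 0, and let α > 0. Then p̄ is a stationary point of the problem min_{p∈C} f(p) (i.e., ⟨grad f(p̄), Proj^κ_{p̄} q⟩ ≥ 0 for all q ∈ C) if and only if p̄ = P_C(exp_{p̄}(−α grad f(p̄))). -/

import Mathlib

noncomputable section

/-- Lorentzian inner product on ℝ^{n+1}. -/
def lip {n : ℕ} (x y : Fin (n+1) → ℝ) : ℝ :=
  (∑ i : Fin n, x i.castSucc * y i.castSucc) - x (Fin.last n) * y (Fin.last n)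

/-- Lorentzian norm (of vectors with nonnegative self-product). -/
def lnorm {n : ℕ} (x : Fin (n+1) → ℝ) : ℝ := Real.sqrt (lip x x)

/-- Euclidean dot product. -/
def edot {n : ℕ} (x y : Fin (n+1) → ℝ) : ℝ := ∑ i, x i * y i

/-- The matrix J = diag(1,…,1,−1) as a map. -/
def Jm {n : ℕ} (x : Fin (n+1) → ℝ) : Fin (n+1) → ℝ :=
  fun i => if i = Fin.last n then -(x i) else x i

/-- The κ-hyperbolic space form (hyperboloid model). -/
def Hyp {n : ℕ} (κ : ℝ) : Set (Fin (n+1) → ℝ) :=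
  {p | lip p p = -1/κ ∧ 0 < p (Fin.last n)}

/-- Inverse hyperbolic cosine. -/
def arcosh (x : ℝ) : ℝ := Real.log (x + Real.sqrt (x^2 - 1))

/-- Intrinsic distance on the κ-hyperbolic space form. -/
def dH {n : ℕ} (κ : ℝ) (p q : Fin (n+1) → ℝ) : ℝ :=
  (1 / Real.sqrt κ) * arcosh (-(κ * lip p q))

/-- Lorentzian projection onto the tangent space at p. -/
def projT {n : ℕ} (κ : ℝ) (p x : Fin (n+1) → ℝ) : Fin (n+1) → ℝ :=
  x + (κ * lip p x) • p

/-- Logarithm map of the κ-hyperbolic space form. -/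
def logH {n : ℕ} (κ : ℝ) (p q : Fin (n+1) → ℝ) : Fin (n+1) → ℝ :=
  (dH κ p q / lnorm (projT κ p q)) • projT κ p q

/-- Exponential map of the κ-hyperbolic space form. -/
def expH {n : ℕ} (κ : ℝ) (p v : Fin (n+1) → ℝ) : Fin (n+1) → ℝ :=
  Real.cosh (Real.sqrt κ * lnorm v) • p +
    (Real.sinh (Real.sqrt κ * lnorm v) / (Real.sqrt κ * lnorm v)) • v

/-- The cone spanned by a set. -/
def coneOf {n : ℕ} (C : Set (Fin (n+1) → ℝ)) : Set (Fin (n+1) → ℝ) :=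
  {x | ∃ t : ℝ, 0 ≤ t ∧ ∃ p ∈ C, x = t • p}

/-- The Lorentz cone. -/
def LorentzCone {n : ℕ} : Set (Fin (n+1) → ℝ) :=
  {x | lip x x ≤ 0 ∧ 0 ≤ x (Fin.last n)}

/-- The interior of the Lorentz cone. -/
def LorentzConeInt {n : ℕ} : Set (Fin (n+1) → ℝ) :=
  {x | lip x x < 0 ∧ 0 < x (Fin.last n)}

/-- Euclidean gradient of f at p. -/
def euclGrad {n : ℕ} (f : (Fin (n+1) → ℝ) → ℝ) (p : Fin (n+1) → ℝ) : Fin (n+1) → ℝ :=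
  fun i => fderiv ℝ f p (Pi.single i 1)

/-- Riemannian gradient on the κ-hyperbolic space form. -/
def gradH {n : ℕ} (κ : ℝ) (f : (Fin (n+1) → ℝ) → ℝ) (p : Fin (n+1) → ℝ) : Fin (n+1) → ℝ :=
  projT κ p (Jm (euclGrad f p))

/-- Parallel transport from T_p to T_q along the geodesic. -/
def ptrans {n : ℕ} (κ : ℝ) (p q v : Fin (n+1) → ℝ) : Fin (n+1) → ℝ :=
  v - ((κ / (κ * lip p q - 1)) * lip q v) • (p + q)

/-!
Write `q = exp_{p̄}(-α grad f(p̄))`. Every `log_x y` is a positive multiple of `Proj_x y`, and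
`log_{p̄} q = -α grad f(p̄)`, so stationarity of `p̄` says that the angle at `p̄` between `q` and
any point of `C` is at least `π/2`, while the variational inequality for `z = P_C(q)` says the
same of the angles at `z`. If `p̄ = z` these two statements coincide. If `p̄ ≠ z`, the triangle
`p̄ z q` would have two non-acute angles, which hyperbolic trigonometry forbids: writing
`u, v, w` for `-κ⟨·,·⟩` of the pairs `(p̄, z)`, `(p̄, q)`, `(z, q)` (the `cosh` of the scaled side
lengths), the angle conditions read `uv ≤ w` and `uw ≤ v`, so `u²v ≤ v`,
against `u > 1` and `v ≥ 1`.
-/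

section Lorentz

variable {n : ℕ}

lemma lip_comm (x y : Fin (n+1) → ℝ) : lip x y = lip y x := by
  simp only [lip, mul_comm]

lemma lip_add_left (x y w : Fin (n+1) → ℝ) : lip (x + y) w = lip x w + lip y w := by
  simp only [lip, Pi.add_apply, add_mul, Finset.sum_add_distrib]
  ring

lemma lip_add_right (x y w : Fin (n+1) → ℝ) : lip x (y + w) = lip x y + lip x w := by
  rw [lip_comm, lip_add_left, lip_comm y, lip_comm w]

lemma lip_smul_left (c : ℝ) (x y : Fin (n+1) → ℝ) : lip (c • x) y = c * lip x y := by
  simp only [lip, Pi.smul_apply, smul_eq_mul, Finset.mul_sum, mul_sub, mul_assoc]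

lemma lip_smul_right (c : ℝ) (x y : Fin (n+1) → ℝ) : lip x (c • y) = c * lip x y := by
  rw [lip_comm, lip_smul_left, lip_comm]

lemma lip_eq_dotProduct_init (x y : Fin (n+1) → ℝ) :
    lip x y = Fin.init x ⬝ᵥ Fin.init y - x (Fin.last n) * y (Fin.last n) :=
  rfl

lemma dotProduct_sq_le (x y : Fin n → ℝ) : (x ⬝ᵥ y) ^ 2 ≤ (x ⬝ᵥ x) * (y ⬝ᵥ y) := by
  simpa only [dotProduct, sq] using Finset.sum_mul_sq_le_sq_mul_sq Finset.univ x y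

lemma dotProduct_self_nonneg (x : Fin n → ℝ) : 0 ≤ x ⬝ᵥ x :=
  Finset.sum_nonneg fun i _ => mul_self_nonneg (x i)

lemma eq_zero_of_init_eq_zero {x : Fin (n+1) → ℝ} (hinit : Fin.init x = 0)
    (hlast : x (Fin.last n) = 0) : x = 0 := by
  funext i
  induction i using Fin.lastCases with
  | last => exact hlast
  | cast j => exact congrFun hinit j

lemma lip_self_pos_of_lip_eq_zero {p v : Fin (n+1) → ℝ} (hp : lip p p < 0)
    (hv : lip p v = 0) (hv0 : v ≠ 0) : 0 < lip v v := by
  rw [lip_eq_dotProduct_init] at hp hv ⊢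
  have hCS := dotProduct_sq_le (Fin.init p) (Fin.init v)
  have hA := dotProduct_self_nonneg (Fin.init p)
  set A := Fin.init p ⬝ᵥ Fin.init p
  set B := Fin.init v ⬝ᵥ Fin.init v
  set a := p (Fin.last n)
  set b := v (Fin.last n)
  by_contra! hvv
  have hab : (a * b) ^ 2 ≤ A * b ^ 2 := by
    rw [show a * b = Fin.init p ⬝ᵥ Fin.init v by linarith]
    nlinarith [mul_le_mul_of_nonneg_left hvv hA]
  have hb2 : b ^ 2 ≤ 0 := by
    by_contra! hb
    nlinarith [mul_pos (sub_pos.2 (show A < a * a by linarith)) hb]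
  have hb : b = 0 := pow_eq_zero_iff two_ne_zero |>.1 (le_antisymm hb2 (sq_nonneg b))
  have hB : B = 0 := le_antisymm (by nlinarith) (dotProduct_self_nonneg _)
  exact hv0 (eq_zero_of_init_eq_zero (dotProduct_self_eq_zero.1 hB) hb)

lemma lip_neg_iff_last_pos {x y : Fin (n+1) → ℝ} (hx : lip x x < 0) (hy : lip y y < 0)
    (hxlast : 0 < x (Fin.last n)) : lip x y < 0 ↔ 0 < y (Fin.last n) := by
  rw [lip_eq_dotProduct_init] at hx hy ⊢
  have hCS := dotProduct_sq_le (Fin.init x) (Fin.init y)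
  have hA := dotProduct_self_nonneg (Fin.init x)
  have hB := dotProduct_self_nonneg (Fin.init y)
  set S := Fin.init x ⬝ᵥ Fin.init y
  set a := x (Fin.last n)
  set b := y (Fin.last n)
  have hsq : S ^ 2 < (a * b) ^ 2 := by
    nlinarith [mul_le_mul_of_nonneg_left hy.le hA]
  obtain ⟨hlo, hhi⟩ := abs_lt.1 (sq_lt_sq.1 hsq)
  rw [abs_mul, abs_of_pos hxlast] at hlo hhi
  constructor
  · intro h
    by_contra! hb
    rw [abs_of_nonpos hb] at hlo
    linarith
  · intro hb
    rw [abs_of_pos hb] at hhi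
    linarith

end Lorentz

section Hyperboloid

variable {n : ℕ} {κ : ℝ}

lemma lip_self_neg_of_mem_Hyp (hκ : 0 < κ) {p : Fin (n+1) → ℝ} (hp : p ∈ Hyp κ) :
    lip p p < 0 := by
  rw [hp.1]
  exact div_neg_of_neg_of_pos neg_one_lt_zero hκ

lemma lip_projT_left (hκ : κ ≠ 0) {p : Fin (n+1) → ℝ} (hp : lip p p = -1/κ)
    (x : Fin (n+1) → ℝ) : lip p (projT κ p x) = 0 := by
  rw [projT, lip_add_right, lip_smul_right, hp]
  field_simp
  ring

lemma lip_projT_projT {p : Fin (n+1) → ℝ} (hp : lip p p = -1/κ)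
    (x y : Fin (n+1) → ℝ) :
    lip (projT κ p x) (projT κ p y) = lip x y + κ * lip p x * lip p y := by
  rw [projT, projT, lip_add_left, lip_add_right, lip_add_right, lip_smul_left, lip_smul_right,
    lip_smul_right, lip_smul_left, hp, lip_comm x p]
  field_simp
  ring

lemma projT_self (hκ : κ ≠ 0) {p : Fin (n+1) → ℝ} (hp : lip p p = -1/κ) :
    projT κ p p = 0 := by
  rw [projT, hp, mul_div_cancel₀ _ hκ, neg_one_smul, add_neg_cancel]

lemma lip_neg_of_mem_Hyp (hκ : 0 < κ) {p q : Fin (n+1) → ℝ} (hp : p ∈ Hyp κ)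
    (hq : q ∈ Hyp κ) : lip p q < 0 :=
  (lip_neg_iff_last_pos (lip_self_neg_of_mem_Hyp hκ hp) (lip_self_neg_of_mem_Hyp hκ hq) hp.2).2
    hq.2

lemma eq_of_projT_eq_zero (hκ : 0 < κ) {p q : Fin (n+1) → ℝ} (hp : p ∈ Hyp κ)
    (hq : q ∈ Hyp κ) (h : projT κ p q = 0) : p = q := by
  set c := -(κ * lip p q)
  have hqc : q = c • p := (eq_neg_of_add_eq_zero_left h).trans (neg_smul _ _).symm
  have hc : 0 < c := neg_pos.2 (mul_neg_of_pos_of_neg hκ (lip_neg_of_mem_Hyp hκ hp hq))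
  have hc2 : c ^ 2 = 1 := by
    have hqq := hq.1
    rw [hqc, lip_smul_left, lip_smul_right, hp.1] at hqq
    field_simp at hqq
    linarith
  rw [hqc, (pow_eq_one_iff_of_nonneg hc.le two_ne_zero).1 hc2, one_smul]

lemma lip_projT_self_pos (hκ : 0 < κ) {p q : Fin (n+1) → ℝ} (hp : p ∈ Hyp κ)
    (hq : q ∈ Hyp κ) (hne : p ≠ q) : 0 < lip (projT κ p q) (projT κ p q) :=
  lip_self_pos_of_lip_eq_zero (lip_self_neg_of_mem_Hyp hκ hp) (lip_projT_left hκ.ne' hp.1 q)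
    (mt (eq_of_projT_eq_zero hκ hp hq) hne)

lemma mul_lip_lt_neg_one (hκ : 0 < κ) {p q : Fin (n+1) → ℝ} (hp : p ∈ Hyp κ)
    (hq : q ∈ Hyp κ) (hne : p ≠ q) : κ * lip p q < -1 := by
  have hpos := lip_projT_self_pos hκ hp hq hne
  rw [lip_projT_projT hp.1, hq.1] at hpos
  have hneg := mul_neg_of_pos_of_neg hκ (lip_neg_of_mem_Hyp hκ hp hq)
  have hsq : 1 < (κ * lip p q) ^ 2 := by
    have := mul_pos hκ hpos
    field_simp at this
    nlinarith
  nlinarith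

lemma mul_lip_le_neg_one (hκ : 0 < κ) {p q : Fin (n+1) → ℝ} (hp : p ∈ Hyp κ)
    (hq : q ∈ Hyp κ) : κ * lip p q ≤ -1 := by
  rcases eq_or_ne p q with rfl | hne
  · rw [hp.1, mul_div_cancel₀ _ hκ.ne']
  · exact (mul_lip_lt_neg_one hκ hp hq hne).le

lemma arcosh_cosh {t : ℝ} (ht : 0 ≤ t) : arcosh (Real.cosh t) = t := by
  rw [arcosh, show Real.cosh t ^ 2 - 1 = Real.sinh t ^ 2 by linarith [Real.cosh_sq t],
    Real.sqrt_sq (Real.sinh_nonneg_iff.2 ht), Real.cosh_add_sinh, Real.log_exp]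

lemma arcosh_pos {x : ℝ} (hx : 1 < x) : 0 < arcosh x :=
  Real.log_pos (by linarith [Real.sqrt_nonneg (x ^ 2 - 1)])

lemma logH_self (hκ : κ ≠ 0) {p : Fin (n+1) → ℝ} (hp : lip p p = -1/κ) : logH κ p p = 0 := by
  rw [logH, projT_self hκ hp, smul_zero]

lemma exists_pos_logH_eq_smul_projT (hκ : 0 < κ) {p q : Fin (n+1) → ℝ} (hp : p ∈ Hyp κ)
    (hq : q ∈ Hyp κ) : ∃ s : ℝ, 0 < s ∧ logH κ p q = s • projT κ p q := by
  rcases eq_or_ne p q with rfl | hne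
  · exact ⟨1, one_pos, by rw [logH_self hκ.ne' hp.1, projT_self hκ.ne' hp.1, smul_zero]⟩
  refine ⟨_, div_pos (mul_pos (one_div_pos.2 (Real.sqrt_pos.2 hκ)) (arcosh_pos ?_))
    (Real.sqrt_pos.2 (lip_projT_self_pos hκ hp hq hne)), rfl⟩
  linarith [mul_lip_lt_neg_one hκ hp hq hne]

lemma lip_logH_logH_nonpos_iff (hκ : 0 < κ) {x y w : Fin (n+1) → ℝ} (hx : x ∈ Hyp κ)
    (hy : y ∈ Hyp κ) (hw : w ∈ Hyp κ) :
    lip (logH κ x y) (logH κ x w) ≤ 0 ↔ lip (projT κ x y) (projT κ x w) ≤ 0 := by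
  obtain ⟨s, hs, hsy⟩ := exists_pos_logH_eq_smul_projT hκ hx hy
  obtain ⟨r, hr, hrw⟩ := exists_pos_logH_eq_smul_projT hκ hx hw
  rw [hsy, hrw, lip_smul_left, lip_smul_right, ← mul_assoc, ← neg_nonneg, ← mul_neg,
    mul_nonneg_iff_of_pos_left (mul_pos hs hr), neg_nonneg]

/-- A hyperbolic triangle has at most one non-acute angle. -/
lemma eq_of_lip_projT_nonpos (hκ : 0 < κ) {x y w : Fin (n+1) → ℝ} (hx : x ∈ Hyp κ)
    (hy : y ∈ Hyp κ) (hw : w ∈ Hyp κ) (hxw : lip (projT κ x w) (projT κ x y) ≤ 0)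
    (hyw : lip (projT κ y w) (projT κ y x) ≤ 0) : x = y := by
  by_contra hne
  rw [lip_projT_projT hx.1] at hxw
  rw [lip_projT_projT hy.1, lip_comm y x] at hyw
  set u := -(κ * lip x y)
  set v := -(κ * lip x w)
  set w' := -(κ * lip y w)
  have hu : 1 < u := by linarith [mul_lip_lt_neg_one hκ hx hy hne]
  have hv : 1 ≤ v := by linarith [mul_lip_le_neg_one hκ hx hw]
  have huv : u * v ≤ w' := by
    have := mul_le_mul_of_nonneg_left hxw hκ.le
    rw [lip_comm w y] at this
    nlinarith
  have huw : u * w' ≤ v := by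
    have := mul_le_mul_of_nonneg_left hyw hκ.le
    rw [lip_comm w x] at this
    nlinarith
  have huuv : u * u * v ≤ v := by
    nlinarith [mul_le_mul_of_nonneg_left huv (by linarith : (0:ℝ) ≤ u)]
  nlinarith [mul_pos (by nlinarith : 0 < u * u - 1) (by linarith : 0 < v)]

end Hyperboloid

section Exp

variable {n : ℕ} {κ : ℝ} {p v : Fin (n+1) → ℝ}

lemma expH_zero : expH κ p 0 = p := by
  simp [expH, lnorm, lip]

lemma lnorm_nonneg (v : Fin (n+1) → ℝ) : 0 ≤ lnorm v :=
  Real.sqrt_nonneg _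

lemma lnorm_smul (c : ℝ) (v : Fin (n+1) → ℝ) : lnorm (c • v) = |c| * lnorm v := by
  rw [lnorm, lnorm, lip_smul_left, lip_smul_right, ← mul_assoc, Real.sqrt_mul (mul_self_nonneg c),
    Real.sqrt_mul_self_eq_abs]

lemma lip_expH_left (hp : lip p p = -1/κ) (hv : lip p v = 0) :
    lip p (expH κ p v) = -Real.cosh (Real.sqrt κ * lnorm v) / κ := by
  rw [expH, lip_add_right, lip_smul_right, lip_smul_right, hp, hv]
  ring

lemma projT_expH (hκ : κ ≠ 0) (hp : lip p p = -1/κ) (hv : lip p v = 0) :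
    projT κ p (expH κ p v) =
      (Real.sinh (Real.sqrt κ * lnorm v) / (Real.sqrt κ * lnorm v)) • v := by
  rw [projT, lip_expH_left hp hv, mul_div_cancel₀ _ hκ, expH, neg_smul]
  abel

lemma dH_expH (hκ : 0 < κ) (hp : lip p p = -1/κ) (hv : lip p v = 0) :
    dH κ p (expH κ p v) = lnorm v := by
  have hsκ : 0 < Real.sqrt κ := Real.sqrt_pos.2 hκ
  rw [dH, lip_expH_left hp hv, mul_div_cancel₀ _ hκ.ne', neg_neg,
    arcosh_cosh (mul_nonneg hsκ.le (lnorm_nonneg v))]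
  field_simp

lemma lip_expH_self (hκ : 0 < κ) (hp : lip p p = -1/κ) (hv : lip p v = 0)
    (hvv : 0 < lip v v) : lip (expH κ p v) (expH κ p v) = -1/κ := by
  simp only [expH, lip_add_left, lip_add_right, lip_smul_left, lip_smul_right]
  rw [hp, hv, lip_comm v p, hv]
  set t := Real.sqrt κ * lnorm v
  have ht0 : t ≠ 0 := mul_ne_zero (Real.sqrt_pos.2 hκ).ne' (Real.sqrt_pos.2 hvv).ne'
  have hvv' : lip v v = t ^ 2 / κ := by
    rw [mul_pow, Real.sq_sqrt hκ.le, lnorm, Real.sq_sqrt hvv.le, mul_div_cancel_left₀ _ hκ.ne']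
  rw [hvv']
  field_simp
  linear_combination (-t) * Real.cosh_sq t

lemma expH_mem_Hyp (hκ : 0 < κ) (hp : p ∈ Hyp κ) (hv : lip p v = 0) : expH κ p v ∈ Hyp κ := by
  rcases eq_or_ne v 0 with rfl | hv0
  · rwa [expH_zero]
  have hpp := lip_self_neg_of_mem_Hyp hκ hp
  have hqq := lip_expH_self hκ hp.1 hv (lip_self_pos_of_lip_eq_zero hpp hv hv0)
  refine ⟨hqq, (lip_neg_iff_last_pos hpp ((hqq.trans hp.1.symm).trans_lt hpp) hp.2).1 ?_⟩
  rw [lip_expH_left hp.1 hv]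
  exact div_neg_of_neg_of_pos (neg_neg_of_pos (Real.cosh_pos _)) hκ

lemma logH_expH (hκ : 0 < κ) (hp : p ∈ Hyp κ) (hv : lip p v = 0) : logH κ p (expH κ p v) = v := by
  rcases eq_or_ne v 0 with rfl | hv0
  · rw [expH_zero, logH_self hκ.ne' hp.1]
  have hr : 0 < lnorm v :=
    Real.sqrt_pos.2 (lip_self_pos_of_lip_eq_zero (lip_self_neg_of_mem_Hyp hκ hp) hv hv0)
  have ht : 0 < Real.sqrt κ * lnorm v := mul_pos (Real.sqrt_pos.2 hκ) hr
  have hc : 0 < Real.sinh (Real.sqrt κ * lnorm v) / (Real.sqrt κ * lnorm v) :=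
    div_pos (Real.sinh_pos_iff.2 ht) ht
  rw [logH, dH_expH hκ hp.1 hv, projT_expH hκ.ne' hp.1 hv, lnorm_smul, abs_of_pos hc, smul_smul,
    div_mul_cancel_right₀ hr.ne', inv_mul_cancel₀ hc.ne', one_smul]

end Exp

theorem stationary_iff_fixed_point_of_projection_general {n : ℕ} (κ : ℝ) (hκ : 0 < κ)
    (C : Set (Fin (n+1) → ℝ)) (hC : C ⊆ Hyp κ)
    (f : (Fin (n+1) → ℝ) → ℝ)
    (pbar : Fin (n+1) → ℝ) (hpbar : pbar ∈ C)
    (α : ℝ) (hα : 0 < α)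
    (z : Fin (n+1) → ℝ) (hzmem : z ∈ C)
    (hzvar : ∀ y ∈ C,
      lip (logH κ z (expH κ pbar (-(α • gradH κ f pbar)))) (logH κ z y) ≤ 0) :
    (∀ q ∈ C, 0 ≤ lip (gradH κ f pbar) (projT κ pbar q)) ↔ pbar = z := by
  have hp := hC hpbar
  have htan : lip pbar (-(α • gradH κ f pbar)) = 0 := by
    rw [← neg_smul, lip_smul_right, gradH, lip_projT_left hκ.ne' hp.1, mul_zero]
  set g := gradH κ f pbar
  set q := expH κ pbar (-(α • g))
  have hq : q ∈ Hyp κ := expH_mem_Hyp hκ hp htan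
  have hangle : ∀ y, 0 ≤ lip g (projT κ pbar y) ↔ lip (projT κ pbar q) (projT κ pbar y) ≤ 0 := by
    obtain ⟨s, hs, hlog⟩ := exists_pos_logH_eq_smul_projT hκ hp hq
    rw [logH_expH hκ hp htan] at hlog
    intro y
    have key : s * lip (projT κ pbar q) (projT κ pbar y) = -α * lip g (projT κ pbar y) := by
      rw [← lip_smul_left, ← hlog, ← neg_smul, lip_smul_left]
    constructor <;> intro h <;> nlinarith
  constructor
  · intro hstat
    exact eq_of_lip_projT_nonpos hκ hp (hC hzmem) hq ((hangle z).1 (hstat z hzmem))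
      ((lip_logH_logH_nonpos_iff hκ (hC hzmem) hq hp).1 (hzvar pbar hpbar))
  · rintro rfl y hy
    exact (hangle y).2 ((lip_logH_logH_nonpos_iff hκ hp hq (hC hy)).1 (hzvar y hy))

/-- Characterization of stationary points via the projection: for p̄ ∈ C with
grad f(p̄) ≠ 0 and α > 0, p̄ is stationary for min_{p∈C} f (i.e.
⟨grad f(p̄), Proj^κ_{p̄} q⟩ ≥ 0 for all q ∈ C) iff p̄ = P_C(exp_{p̄}(−α grad f(p̄))),
where z denotes the intrinsic projection P_C(exp_{p̄}(−α grad f(p̄))). -/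
theorem stationary_iff_fixed_point_of_projection {n : ℕ} (κ : ℝ) (hκ : 0 < κ)
    (C : Set (Fin (n+1) → ℝ)) (hC : C ⊆ Hyp κ) (hCc : IsClosed C)
    (hconv : Convex ℝ (coneOf C))
    (f : (Fin (n+1) → ℝ) → ℝ) (hf : Differentiable ℝ f)
    (pbar : Fin (n+1) → ℝ) (hpbar : pbar ∈ C)
    (hg : gradH κ f pbar ≠ 0)
    (α : ℝ) (hα : 0 < α)
    (z : Fin (n+1) → ℝ) (hzmem : z ∈ C)
    (hzmin : ∀ y ∈ C, dH κ (expH κ pbar (-(α • gradH κ f pbar))) z ≤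
      dH κ (expH κ pbar (-(α • gradH κ f pbar))) y)
    (hzvar : ∀ y ∈ C,
      lip (logH κ z (expH κ pbar (-(α • gradH κ f pbar)))) (logH κ z y) ≤ 0) :
    (∀ q ∈ C, 0 ≤ lip (gradH κ f pbar) (projT κ pbar q)) ↔ pbar = z :=
  stationary_iff_fixed_point_of_projection_general κ hκ C hC f pbar hpbar α hα z hzmem hzvar
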